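/- Let t₁ > 0, let g ∈ L¹(0,t₁) be nonnegative, let κ₁ ≥ 0, and let Y : [0,t₁] → [0,∞) be continuous with Y(0) = 0. Suppose that for every ε with 0 < ε ≤ 1, Y is absolutely continuous and satisfies the differential inequality Y'(t) ≤ κ₁ ε^{-1/(1+ε)} Y(t)^{1/(1+ε)} + g(t) Y(t) for almost every t ∈ (0,t₁). Then Y(t) = 0 for all t ∈ [0,t₁]. -/
import Mathlib


open MeasureTheory Set

/-- FTC inequality with an a.e. derivative bound, for everywhere-differentiable functions. -/
theorem ftc_ae_aux {f φ : ℝ → ℝ} {a b : ℝ} (hab : a ≤ b)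
    (hcont : ContinuousOn f (Icc a b))
    (hderiv : ∀ x ∈ Ioo a b, DifferentiableAt ℝ f x)
    (φint : IntegrableOn φ (Icc a b))
    (hφ : ∀ᵐ x ∂(volume.restrict (Ioo a b)), deriv f x ≤ φ x) :
    f b - f a ≤ ∫ y in a..b, φ y := by
  set ψ : ℝ → ℝ := fun x => max (φ x) (deriv f x) with hψdef
  have hres : volume.restrict (Ioo a b) = volume.restrict (Icc a b) :=
    Measure.restrict_congr_set Ioo_ae_eq_Icc
  have hψφ : ψ =ᵐ[volume.restrict (Icc a b)] φ := by
    rw [← hres]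
    filter_upwards [hφ] with x hx
    simp only [hψdef]
    exact max_eq_left hx
  have ψint : IntegrableOn ψ (Icc a b) := φint.congr hψφ.symm
  have h1 : f b - f a ≤ ∫ y in a..b, ψ y :=
    intervalIntegral.sub_le_integral_of_hasDeriv_right_of_le hab hcont
      (fun x hx => ((hderiv x hx).hasDerivAt).hasDerivWithinAt) ψint
      (fun x _ => le_max_right _ _)
  have h2 : (∫ y in a..b, ψ y) = ∫ y in a..b, φ y := by
    rw [intervalIntegral.integral_of_le hab, intervalIntegral.integral_of_le hab]
    apply integral_congr_ae
    have hres2 : volume.restrict (Ioc a b) = volume.restrict (Icc a b) :=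
      Measure.restrict_congr_set Ioc_ae_eq_Icc
    rw [hres2]
    exact hψφ
  linarith [h1, h2.le, h2.ge]

set_option maxHeartbeats 1000000 in
/-- Osgood/Yudovich-type uniqueness lemma: if for every `0 < ε ≤ 1` the continuous
nonnegative function `Y` with `Y 0 = 0` satisfies
`Y'(t) ≤ κ₁ ε^{-1/(1+ε)} Y(t)^{1/(1+ε)} + g(t) Y(t)` a.e. on `(0,t₁)`, then `Y ≡ 0`. -/
theorem stmt5 (t₁ : ℝ) (ht₁ : 0 < t₁) (g : ℝ → ℝ)
    (hg : IntegrableOn g (Ioo 0 t₁))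
    (hgnn : ∀ t ∈ Ioo 0 t₁, 0 ≤ g t)
    (κ₁ : ℝ) (hκ : 0 ≤ κ₁) (Y : ℝ → ℝ)
    (hYc : ContinuousOn Y (Icc 0 t₁)) (hY0 : Y 0 = 0)
    (hYnn : ∀ t ∈ Icc 0 t₁, 0 ≤ Y t)
    (hYd : ∀ t ∈ Ioo 0 t₁, DifferentiableAt ℝ Y t)
    (hode : ∀ ε : ℝ, 0 < ε → ε ≤ 1 →
      ∀ᵐ t ∂(volume.restrict (Ioo 0 t₁)),
        deriv Y t ≤ κ₁ * ε ^ (-(1 / (1 + ε))) * Y t ^ (1 / (1 + ε)) + g t * Y t) :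
    ∀ t ∈ Icc 0 t₁, Y t = 0 := by
  -- a uniform bound `B ≥ 1` for `Y`
  obtain ⟨B₀, hB₀⟩ : ∃ B₀, ∀ t ∈ Icc 0 t₁, Y t ≤ B₀ := by
    obtain ⟨C, hC⟩ := (isCompact_Icc.image_of_continuousOn hYc).bddAbove
    exact ⟨C, fun t ht => hC ⟨t, ht, rfl⟩⟩
  set B : ℝ := max 1 B₀ with hBdef
  have hB1 : (1:ℝ) ≤ B := le_max_left _ _
  have hB0 : (0:ℝ) < B := lt_of_lt_of_le one_pos hB1
  have hB : ∀ t ∈ Icc 0 t₁, Y t ≤ B := fun t ht => (hB₀ t ht).trans (le_max_right _ _)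
  set G : ℝ := ∫ t in Ioo 0 t₁, g t with hGdef
  have hG0 : 0 ≤ G := setIntegral_nonneg measurableSet_Ioo hgnn
  have hgIcc : IntegrableOn g (Icc 0 t₁) := by
    rwa [IntegrableOn,
      ← Measure.restrict_congr_set (Ioo_ae_eq_Icc (μ := volume) (a := 0) (b := t₁))]
  have hBG : (0:ℝ) ≤ B * G := mul_nonneg hB0.le hG0
  -- Key step: propagation of the zero from `a` over a short interval
  have key : ∀ a b : ℝ, 0 ≤ a → a ≤ b → b ≤ t₁ → Y a = 0 → κ₁ * (b - a) ≤ 1/4 →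
      ∀ t ∈ Icc a b, Y t = 0 := by
    intro a b ha hab hb hYa hsmall t ht
    have hat : a ≤ t := ht.1
    have htt₁ : t ≤ t₁ := ht.2.trans hb
    have ht0 : 0 ≤ t := ha.trans hat
    have hIccsub : Icc a t ⊆ Icc 0 t₁ := Icc_subset_Icc ha htt₁
    have hIoosub : Ioo a t ⊆ Ioo 0 t₁ := fun x hx =>
      ⟨lt_of_le_of_lt ha hx.1, lt_of_lt_of_le hx.2 htt₁⟩
    set ε₀ : ℝ := min 1 (1/(4*(B*G+1))) with hε₀def
    have hε₀pos : 0 < ε₀ := lt_min one_pos (by positivity)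
    have est : ∀ ε : ℝ, 0 < ε → ε ≤ ε₀ → Y t ^ (ε/(1+ε)) ≤ 1/2 := by
      intro ε hε hεle
      have hε1 : ε ≤ 1 := hεle.trans (min_le_left _ _)
      have h1ε : (0:ℝ) < 1 + ε := by linarith
      set α : ℝ := ε/(1+ε) with hαdef
      set β : ℝ := 1/(1+ε) with hβdef
      have hα : 0 < α := div_pos hε h1ε
      have hαε : α ≤ ε := div_le_self hε.le (by linarith)
      have hα1 : α ≤ 1 := hαε.trans hε1
      have hβpos : 0 < β := by rw [hβdef]; positivity
      have hβ1 : β ≤ 1 := by rw [hβdef, div_le_one h1ε]; linarith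
      have hαβ : α + β = 1 := by rw [hαdef, hβdef]; field_simp; ring
      have hεβ : (0:ℝ) < ε ^ (-β) := Real.rpow_pos_of_pos hε _
      set h : ℝ → ℝ := fun s => κ₁ * ε ^ (-β) + g s * B ^ α with hhdef
      have hint : IntegrableOn h (Icc a t) := by
        apply Integrable.add (integrable_const _)
        exact ((hgIcc.mono_set hIccsub).mul_const _)
      -- the δ-regularized estimate
      have main : ∀ δ : ℝ, 0 < δ → (Y t + δ) ^ α ≤ δ ^ α + 1/2 := by
        intro δ hδ
        set V : ℝ → ℝ := fun s => (Y s + δ) ^ α with hVdef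
        have hYpos : ∀ s ∈ Icc 0 t₁, 0 < Y s + δ := fun s hs => by
          have := hYnn s hs; linarith
        have hVc : ContinuousOn V (Icc a t) := by
          apply ContinuousOn.rpow_const ((hYc.mono hIccsub).add continuousOn_const)
          intro x hx
          exact Or.inl (ne_of_gt (hYpos x (hIccsub hx)))
        have hVderiv : ∀ x ∈ Ioo a t,
            HasDerivAt V (deriv Y x * α * (Y x + δ) ^ (α - 1)) x := by
          intro x hx
          have hx' : x ∈ Ioo 0 t₁ := hIoosub hx
          have hdY : HasDerivAt (fun s => Y s + δ) (deriv Y x) x :=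
            ((hYd x hx').hasDerivAt).add_const δ
          exact hdY.rpow_const (Or.inl (ne_of_gt (hYpos x (hIccsub (Ioo_subset_Icc_self hx)))))
        have hVd : ∀ x ∈ Ioo a t, DifferentiableAt ℝ V x :=
          fun x hx => (hVderiv x hx).differentiableAt
        -- a.e. bound on `deriv V`
        have hae : ∀ᵐ x ∂(volume.restrict (Ioo a t)), deriv V x ≤ α * h x := by
          have h1 : ∀ᵐ x ∂(volume.restrict (Ioo a t)),
              deriv Y x ≤ κ₁ * ε ^ (-(1 / (1 + ε))) * Y x ^ (1 / (1 + ε)) + g x * Y x :=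
            ae_restrict_of_ae_restrict_of_subset hIoosub (hode ε hε hε1)
          filter_upwards [h1, ae_restrict_mem measurableSet_Ioo] with x hx hmem
          have hx01 : x ∈ Ioo 0 t₁ := hIoosub hmem
          have hxIcc : x ∈ Icc 0 t₁ := Ioo_subset_Icc_self hx01
          have hYx : 0 ≤ Y x := hYnn x hxIcc
          have hYxδ : 0 < Y x + δ := by linarith
          have hdV : deriv V x = deriv Y x * α * (Y x + δ) ^ (α - 1) :=
            (hVderiv x hmem).deriv
          have hfactor : 0 ≤ α * (Y x + δ) ^ (α - 1) :=
            mul_nonneg hα.le (Real.rpow_nonneg hYxδ.le _)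
          have hYsplit : Y x = Y x ^ β * Y x ^ α := by
            have hβα : β + α = 1 := by linarith
            calc Y x = Y x ^ (1:ℝ) := (Real.rpow_one _).symm
              _ = Y x ^ (β + α) := by rw [hβα]
              _ = Y x ^ β * Y x ^ α := Real.rpow_add' hYx (by rw [hβα]; norm_num)
          have hYβ : Y x ^ β ≤ (Y x + δ) ^ β :=
            Real.rpow_le_rpow hYx (by linarith) hβpos.le
          have hYα : Y x ^ α ≤ B ^ α :=
            Real.rpow_le_rpow hYx (hB x hxIcc) hα.le
          have hRHS : κ₁ * ε ^ (-β) * Y x ^ β + g x * Y x ≤ h x * (Y x + δ) ^ β := by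
            have e1 : κ₁ * ε ^ (-β) * Y x ^ β ≤ κ₁ * ε ^ (-β) * (Y x + δ) ^ β :=
              mul_le_mul_of_nonneg_left hYβ (mul_nonneg hκ hεβ.le)
            have e2 : g x * Y x ≤ g x * B ^ α * (Y x + δ) ^ β := by
              have hmm : Y x ^ β * Y x ^ α ≤ (Y x + δ) ^ β * B ^ α :=
                mul_le_mul hYβ hYα (Real.rpow_nonneg hYx _) (Real.rpow_nonneg hYxδ.le _)
              calc g x * Y x = g x * (Y x ^ β * Y x ^ α) := by rw [← hYsplit]
                _ ≤ g x * ((Y x + δ) ^ β * B ^ α) :=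
                    mul_le_mul_of_nonneg_left hmm (hgnn x hx01)
                _ = g x * B ^ α * (Y x + δ) ^ β := by ring
            simp only [hhdef]
            calc κ₁ * ε ^ (-β) * Y x ^ β + g x * Y x
                ≤ κ₁ * ε ^ (-β) * (Y x + δ) ^ β + g x * B ^ α * (Y x + δ) ^ β := by linarith
              _ = (κ₁ * ε ^ (-β) + g x * B ^ α) * (Y x + δ) ^ β := by ring
          have hpow : (Y x + δ) ^ (α - 1) * (Y x + δ) ^ β = 1 := by
            rw [← Real.rpow_add hYxδ]
            have hz : α - 1 + β = 0 := by linarith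
            rw [hz, Real.rpow_zero]
          calc deriv V x = deriv Y x * (α * (Y x + δ) ^ (α - 1)) := by rw [hdV]; ring
            _ ≤ (κ₁ * ε ^ (-(1 / (1 + ε))) * Y x ^ (1 / (1 + ε)) + g x * Y x)
                  * (α * (Y x + δ) ^ (α - 1)) := mul_le_mul_of_nonneg_right hx hfactor
            _ = (κ₁ * ε ^ (-β) * Y x ^ β + g x * Y x) * (α * (Y x + δ) ^ (α - 1)) := by
                  rw [hβdef]
            _ ≤ h x * (Y x + δ) ^ β * (α * (Y x + δ) ^ (α - 1)) :=
                  mul_le_mul_of_nonneg_right hRHS hfactor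
            _ = α * h x * ((Y x + δ) ^ (α - 1) * (Y x + δ) ^ β) := by ring
            _ = α * h x := by rw [hpow, mul_one]
        have hφint : IntegrableOn (fun s => α * h s) (Icc a t) := hint.const_mul α
        have hFTC : V t - V a ≤ ∫ y in a..t, α * h y :=
          ftc_ae_aux hat hVc hVd hφint hae
        -- compute/estimate the integral
        have hgInt : IntervalIntegrable g volume a t := by
          rw [intervalIntegrable_iff_integrableOn_Ioc_of_le hat]
          exact hgIcc.mono_set (Ioc_subset_Icc_self.trans hIccsub)
        have hIsplit : (∫ y in a..t, α * h y)
            = α * (κ₁ * ε ^ (-β)) * (t - a) + α * B ^ α * ∫ y in a..t, g y := by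
          have hfn : (fun y => α * h y)
              = fun y => (α * (κ₁ * ε ^ (-β))) + (α * B ^ α) * g y := by
            funext y; simp only [hhdef]; ring
          rw [hfn, intervalIntegral.integral_add intervalIntegrable_const
                (hgInt.const_mul _), intervalIntegral.integral_const,
              intervalIntegral.integral_const_mul, smul_eq_mul]
          ring
        have hgle : (∫ y in a..t, g y) ≤ G := by
          rw [intervalIntegral.integral_of_le hat, hGdef]
          apply setIntegral_mono_set hg
          · exact (ae_restrict_iff' measurableSet_Ioo).2 (ae_of_all _ hgnn)
          · have hne : ∀ᵐ x : ℝ ∂volume, x ∈ ({t₁}ᶜ : Set ℝ) :=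
              compl_mem_ae_iff.2 (by simp)
            filter_upwards [hne] with x hxne hx
            exact ⟨lt_of_le_of_lt ha hx.1, lt_of_le_of_ne (hx.2.trans htt₁) hxne⟩
        -- numeric bounds
        have hcoef1 : α * ε ^ (-β) ≤ 1 := by
          have e : α * ε ^ (-β) = β * ε ^ α := by
            have hαεβ : α = ε * β := by rw [hαdef, hβdef]; field_simp
            rw [hαεβ]
            have e2 : ε * β * ε ^ (-β) = β * (ε ^ (1:ℝ) * ε ^ (-β)) := by
              rw [Real.rpow_one]; ring
            rw [e2, ← Real.rpow_add hε]
            congr 2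
            linarith
          rw [e]
          have h1 : ε ^ α ≤ 1 := Real.rpow_le_one hε.le hε1 hα.le
          calc β * ε ^ α ≤ 1 * 1 := mul_le_mul hβ1 h1 (Real.rpow_nonneg hε.le _) one_pos.le
            _ = 1 := one_mul 1
        have hBα : B ^ α ≤ B := by
          calc B ^ α ≤ B ^ (1:ℝ) := Real.rpow_le_rpow_of_exponent_le hB1 hα1
            _ = B := Real.rpow_one B
        have hterm1 : α * (κ₁ * ε ^ (-β)) * (t - a) ≤ 1/4 := by
          have h1' : α * (κ₁ * ε ^ (-β)) * (t - a) = (α * ε ^ (-β)) * (κ₁ * (t - a)) := by ring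
          have h2' : κ₁ * (t - a) ≤ κ₁ * (b - a) :=
            mul_le_mul_of_nonneg_left (by linarith [ht.2]) hκ
          have h3' : 0 ≤ κ₁ * (t - a) := mul_nonneg hκ (by linarith)
          rw [h1']
          calc (α * ε ^ (-β)) * (κ₁ * (t - a)) ≤ 1 * (κ₁ * (t - a)) :=
                mul_le_mul_of_nonneg_right hcoef1 h3'
            _ = κ₁ * (t - a) := one_mul _
            _ ≤ 1/4 := by linarith
        have hεBG : ε * (B * G) ≤ 1/4 := by
          have hε' : ε ≤ 1/(4*(B*G+1)) := hεle.trans (min_le_right _ _)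
          have h4 : (0:ℝ) < 4*(B*G+1) := by positivity
          have hmul : ε * (4*(B*G+1)) ≤ 1 := by
            rw [← le_div_iff₀ h4]; exact hε'
          nlinarith [hBG, hε.le]
        have hterm2 : α * B ^ α * (∫ y in a..t, g y) ≤ 1/4 := by
          have hαB : 0 ≤ α * B ^ α := mul_nonneg hα.le (Real.rpow_nonneg hB0.le _)
          have step1 : α * B ^ α * (∫ y in a..t, g y) ≤ α * B ^ α * G :=
            mul_le_mul_of_nonneg_left hgle hαB
          have step2 : α * B ^ α ≤ ε * B := mul_le_mul hαε hBα (Real.rpow_nonneg hB0.le _) hε.le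
          have step3 : α * B ^ α * G ≤ ε * B * G := mul_le_mul_of_nonneg_right step2 hG0
          have e : ε * B * G = ε * (B * G) := by ring
          linarith [hεBG, e.le, e.ge]
        have hVa : V a = δ ^ α := by simp only [hVdef, hYa, zero_add]
        have hVt : V t ≤ δ ^ α + 1/2 := by
          have := hFTC
          rw [hIsplit, hVa] at this
          linarith
        exact hVt
      -- pass to the limit δ → 0⁺
      have hmono : ∀ δ : ℝ, δ ∈ Ioi (0:ℝ) → Y t ^ α ≤ δ ^ α + 1/2 := by
        intro δ hδ
        refine le_trans ?_ (main δ hδ)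
        exact Real.rpow_le_rpow (hYnn t ⟨ht0, htt₁⟩) (by linarith [hδ.out]) hα.le
      have hlim : Filter.Tendsto (fun δ : ℝ => δ ^ α + 1/2)
          (nhdsWithin 0 (Ioi 0)) (nhds ((0:ℝ) ^ α + 1/2)) := by
        apply Filter.Tendsto.add _ tendsto_const_nhds
        exact ((Real.continuousAt_rpow_const 0 α (Or.inr hα.le)).tendsto).mono_left
          nhdsWithin_le_nhds
      have h0 : (0:ℝ) ^ α + 1/2 = 1/2 := by rw [Real.zero_rpow hα.ne']; ring
      rw [h0] at hlim
      refine ge_of_tendsto hlim ?_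
      filter_upwards [self_mem_nhdsWithin] with δ hδ
      exact hmono δ hδ
    -- conclude `Y t = 0` by letting `ε → 0`
    have hYt0 : Y t ≤ 0 := by
      have hbound : ∀ n : ℕ, Y t ≤ (1/2 : ℝ) ^ n := by
        intro n
        set ε : ℝ := min ε₀ (1/((n:ℝ)+1)) with hεdef
        have hεpos : 0 < ε := lt_min hε₀pos (by positivity)
        have hεle' : ε ≤ ε₀ := min_le_left _ _
        have h1ε : (0:ℝ) < 1 + ε := by linarith
        have hαp : 0 < ε/(1+ε) := div_pos hεpos h1ε
        have hYα : Y t ^ (ε/(1+ε)) ≤ 1/2 := est ε hεpos hεle'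
        have hYnn' : 0 ≤ Y t := hYnn t ⟨ht0, htt₁⟩
        have hYval : Y t = (Y t ^ (ε/(1+ε))) ^ ((1+ε)/ε) := by
          rw [← Real.rpow_mul hYnn']
          have e : (ε/(1+ε)) * ((1+ε)/ε) = 1 := by field_simp
          rw [e, Real.rpow_one]
        have hstep : (Y t ^ (ε/(1+ε))) ^ ((1+ε)/ε) ≤ (1/2:ℝ) ^ ((1+ε)/ε) :=
          Real.rpow_le_rpow (Real.rpow_nonneg hYnn' _) hYα (by positivity)
        have hexp : (n:ℝ) ≤ (1+ε)/ε := by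
          have hεn : ε ≤ 1/((n:ℝ)+1) := min_le_right _ _
          have h1 := one_div_le_one_div_of_le hεpos hεn
          rw [one_div_one_div] at h1
          have h2 : 1/ε ≤ (1+ε)/ε := by gcongr; linarith
          linarith
        have hfin : (1/2:ℝ) ^ ((1+ε)/ε) ≤ (1/2:ℝ) ^ ((n:ℝ)) :=
          Real.rpow_le_rpow_of_exponent_ge (by norm_num) (by norm_num) hexp
        calc Y t = (Y t ^ (ε/(1+ε))) ^ ((1+ε)/ε) := hYval
          _ ≤ (1/2:ℝ) ^ ((1+ε)/ε) := hstep
          _ ≤ (1/2:ℝ) ^ ((n:ℝ)) := hfin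
          _ = (1/2:ℝ) ^ n := Real.rpow_natCast _ n
      exact ge_of_tendsto'
        (tendsto_pow_atTop_nhds_zero_of_lt_one (by norm_num) (by norm_num)) hbound
    exact le_antisymm hYt0 (hYnn t ⟨ht0, htt₁⟩)
  -- iterate the key step
  obtain ⟨n, hn0, hnle⟩ : ∃ n : ℕ, (0:ℝ) < (n:ℝ) ∧ 4*κ₁*t₁ ≤ (n:ℝ) := by
    obtain ⟨m, hm⟩ := exists_nat_ge (4*κ₁*t₁)
    refine ⟨m+1, by exact_mod_cast Nat.succ_pos m, by push_cast; linarith⟩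
  have htd : (0:ℝ) ≤ t₁/(n:ℝ) := by positivity
  have claim : ∀ k : ℕ, k ≤ n → ∀ t ∈ Icc 0 ((k:ℝ) * (t₁/(n:ℝ))), Y t = 0 := by
    intro k
    induction k with
    | zero =>
      intro _ t ht
      have h2 : t ≤ 0 := by simpa using ht.2
      have : t = 0 := le_antisymm h2 ht.1
      rw [this]; exact hY0
    | succ k ih =>
      intro hk t ht
      have hkn : k ≤ n := Nat.le_of_succ_le hk
      rcases le_or_gt t ((k:ℝ) * (t₁/(n:ℝ))) with hle | hgt
      · exact ih hkn t ⟨ht.1, hle⟩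
      · have hb' : ((k:ℝ)+1)*(t₁/(n:ℝ)) ≤ t₁ := by
          have hcast : ((k:ℝ)+1) ≤ (n:ℝ) := by exact_mod_cast hk
          calc ((k:ℝ)+1)*(t₁/(n:ℝ)) ≤ (n:ℝ)*(t₁/(n:ℝ)) :=
                mul_le_mul_of_nonneg_right hcast htd
            _ = t₁ := by field_simp
        have hYa : Y ((k:ℝ)*(t₁/(n:ℝ))) = 0 := ih hkn _ ⟨by positivity, le_rfl⟩
        have hsm : κ₁ * (((k:ℝ)+1)*(t₁/(n:ℝ)) - (k:ℝ)*(t₁/(n:ℝ))) ≤ 1/4 := by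
          have e : ((k:ℝ)+1)*(t₁/(n:ℝ)) - (k:ℝ)*(t₁/(n:ℝ)) = t₁/(n:ℝ) := by ring
          rw [e]
          have e2 : κ₁*(t₁/(n:ℝ)) = (κ₁*t₁)/(n:ℝ) := by ring
          rw [e2, div_le_iff₀ hn0]
          linarith
        have habk : (k:ℝ)*(t₁/(n:ℝ)) ≤ ((k:ℝ)+1)*(t₁/(n:ℝ)) :=
          mul_le_mul_of_nonneg_right (by linarith) htd
        refine key ((k:ℝ)*(t₁/(n:ℝ))) (((k:ℝ)+1)*(t₁/(n:ℝ))) (by positivity) habk hb' hYa hsm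
          t ⟨hgt.le, ?_⟩
        have hc : ((k+1:ℕ):ℝ) = (k:ℝ)+1 := by push_cast; ring
        rw [← hc]
        exact ht.2
  intro t ht
  have hmem : t ∈ Icc 0 ((n:ℝ)*(t₁/(n:ℝ))) := by
    have e : (n:ℝ)*(t₁/(n:ℝ)) = t₁ := by field_simp
    rw [e]; exact ht
  exact claim n le_rfl t hmem
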